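/- Let V be a nonempty finite set and let n be a natural number with n > 8. Let G be a simple graph whose vertex set is the set of composite vertices V × {0, 1, …, n−1}, and suppose that every pair of distinct composite vertices of G has at least |V|·n/4 common neighbors (equivalently, at least |V|·n/4 internally disjoint paths of length 2 between them). Then for every pair of vertices u, v ∈ V and every pair of time indices i, j with j > i + 2, there exists a transtemporal edge of G lying on a path of length at most 2 from the composite vertex (u, i) to the composite vertex (v, j); that is, either {(u,i),(v,j)} is itself an edge of G (and it is transtemporal), or there exists a composite vertex (h, z) adjacent in G to both (u,i) and (v,j) such that at least one of the edges {(u,i),(h,z)}, {(h,z),(v,j)} is transtemporal. -/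
import Mathlib


/-- An edge between composite vertices `x = (a, s)` and `y = (b, t)` of a time-varying
graph is *transtemporal* if `t ≠ s`, `t ≠ s + 1`, and `t ≠ s - 1`
(i.e., the time instants differ by at least 2). -/
def Transtemporal {V : Type*} {n : ℕ} (x y : V × Fin n) : Prop :=
  (x.2 : ℕ) ≠ (y.2 : ℕ) ∧ (x.2 : ℕ) + 1 ≠ (y.2 : ℕ) ∧ (y.2 : ℕ) + 1 ≠ (x.2 : ℕ)

theorem transtemporal_edge_of_many_common_neighbors
    {V : Type*} [Fintype V] [DecidableEq V] [Nonempty V]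
    {n : ℕ} (hn : 8 < n)
    (G : SimpleGraph (V × Fin n)) [DecidableRel G.Adj]
    (hcommon : ∀ x y : V × Fin n, x ≠ y →
      Fintype.card V * n / 4 ≤ (G.neighborFinset x ∩ G.neighborFinset y).card) :
    ∀ (u v : V) (i j : Fin n), (j : ℕ) > (i : ℕ) + 2 →
      (G.Adj (u, i) (v, j) ∧ Transtemporal (u, i) (v, j)) ∨
      (∃ h : V, ∃ z : Fin n, G.Adj (u, i) (h, z) ∧ G.Adj (h, z) (v, j) ∧
        (Transtemporal (u, i) (h, z) ∨ Transtemporal (h, z) (v, j))) := by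
  intro u v i j hij
  right
  have hne : (u, i) ≠ (v, j) := by
    intro h
    have : i = j := congrArg Prod.snd h
    omega
  have hcard := hcommon (u, i) (v, j) hne
  have hV : 1 ≤ Fintype.card V := Fintype.card_pos
  have hpos : 0 < (G.neighborFinset (u, i) ∩ G.neighborFinset (v, j)).card := by
    have : 2 ≤ Fintype.card V * n / 4 := by
      have : 9 ≤ Fintype.card V * n := by
        calc 9 ≤ 1 * n := by omega
        _ ≤ Fintype.card V * n := Nat.mul_le_mul_right n hV
      omega
    omega
  obtain ⟨w, hw⟩ := Finset.card_pos.mp hpos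
  obtain ⟨h, z⟩ := w
  simp only [Finset.mem_inter, SimpleGraph.mem_neighborFinset] at hw
  refine ⟨h, z, hw.1, hw.2.symm, ?_⟩
  by_contra hc
  push_neg at hc
  obtain ⟨h1, h2⟩ := hc
  unfold Transtemporal at h1 h2
  push_neg at h1 h2
  simp only at h1 h2
  omega
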